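/- Let X be a compact Hausdorff space and A a unital C*-algebra with a unital C(X)-structure ι : C(X,ℂ) → A. Then ⋂_{x∈X} I_x = {0}; equivalently, if a ∈ A satisfies ‖a_x‖ = 0 for every x ∈ X, then a = 0. -/

import Mathlib

/-!
Call `a` negligible at `x` if `‖ι U * a‖` is arbitrarily small for functions `U` with `U x = 1`
and `‖U‖ ≤ 1`. Since products of such functions are again such functions and `ι` is central,
negligible elements form a closed two-sided ideal; it contains `ι f` whenever `f x = 0`, hence
contains `I_x`.

If `a ∈ ⋂ₓ I_x`, then `b = a⋆ * a` is negligible at every point and lies in the commutative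
C⋆-subalgebra generated by `b` and `ι(C(X, ℂ))`. A character `χ` of that algebra with
`|χ b| = ‖b‖` restricts along `ι` to evaluation at some `x₀`, so
`‖b‖ = |χ (ι U * b)| ≤ ‖ι U * b‖` whenever `U x₀ = 1`. Thus `b = 0`, and `a = 0` by the
C⋆-identity.
-/

variable {X : Type*} [TopologicalSpace X] [CompactSpace X] [T2Space X]
variable {A : Type*} [CStarAlgebra A]

/-- `fiberIdeal ι x` is the smallest closed two-sided ideal `I_x` of `A` containing
`{ι f : f ∈ C(X,ℂ), f x = 0}`: the intersection of all closed two-sided ideals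
containing that set. -/
def fiberIdeal (ι : C(X, ℂ) →⋆ₐ[ℂ] A) (x : X) : Set A :=
  ⋂₀ {S : Set A | IsClosed S ∧ (∃ I : TwoSidedIdeal A, (I : Set A) = S) ∧
      {a : A | ∃ f : C(X, ℂ), f x = 0 ∧ a = ι f} ⊆ S}

/-- The fibre norm `‖a_x‖ = dist (a, I_x)`, the quotient norm of the image of `a`
in `A / I_x`. -/
noncomputable def fiberNorm (ι : C(X, ℂ) →⋆ₐ[ℂ] A) (x : X) (a : A) : ℝ :=
  Metric.infDist a (fiberIdeal ι x)

section Fiber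

variable {Y : Type*} [TopologicalSpace Y] (ι : C(Y, ℂ) →⋆ₐ[ℂ] A) (x : Y)

theorem zero_mem_fiberIdeal : (0 : A) ∈ fiberIdeal ι x := by
  rintro _ ⟨-, ⟨I, rfl⟩, -⟩
  exact I.zero_mem

theorem isClosed_fiberIdeal : IsClosed (fiberIdeal ι x) :=
  isClosed_sInter fun _ hS => hS.1

theorem fiberNorm_eq_zero_iff {a : A} : fiberNorm ι x a = 0 ↔ a ∈ fiberIdeal ι x :=
  ((isClosed_fiberIdeal ι x).mem_iff_infDist_zero ⟨0, zero_mem_fiberIdeal ι x⟩).symm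

end Fiber

section Negligible

variable {Y : Type*} [TopologicalSpace Y] [CompactSpace Y]

theorem ContinuousMap.exists_apply_eq_one_norm_mul_lt {f : C(Y, ℂ)} {x : Y} (hf : f x = 0)
    {ε : ℝ} (hε : 0 < ε) : ∃ U : C(Y, ℂ), U x = 1 ∧ ‖U‖ ≤ 1 ∧ ‖U * f‖ < ε := by
  set δ := ε / 2
  have hδ : 0 < δ := half_pos hε
  let u : Y → ℝ := fun y => max 0 (1 - ‖f y‖ / δ)
  have hu_le_one : ∀ y, u y ≤ 1 := fun y =>
    max_le zero_le_one (by linarith [div_nonneg (norm_nonneg (f y)) hδ.le])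
  have hu_mul_le : ∀ y, u y * ‖f y‖ ≤ δ := fun y => by
    rcases le_or_gt δ ‖f y‖ with h | h
    · simp [u, max_eq_left (show 1 - ‖f y‖ / δ ≤ 0 by linarith [(one_le_div hδ).2 h]), hδ.le]
    · nlinarith [hu_le_one y, norm_nonneg (f y), le_max_left 0 (1 - ‖f y‖ / δ)]
  let U : C(Y, ℂ) := ⟨fun y => (u y : ℂ), by fun_prop⟩
  have hU : ∀ y, ‖U y‖ = u y := fun y => by simp [U, u]
  refine ⟨U, by simp [U, u, hf], (ContinuousMap.norm_le _ zero_le_one).2 fun y => ?_,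
    lt_of_le_of_lt ((ContinuousMap.norm_le _ hδ.le).2 fun y => ?_) (half_lt_self hε)⟩
  · exact (hU y).trans_le (hu_le_one y)
  · rw [ContinuousMap.mul_apply, norm_mul, hU]
    exact hu_mul_le y

variable (ι : C(Y, ℂ) →⋆ₐ[ℂ] A) (x : Y)

def IsNegligibleAt (a : A) : Prop :=
  ∀ ε > 0, ∃ U : C(Y, ℂ), U x = 1 ∧ ‖U‖ ≤ 1 ∧ ‖ι U * a‖ < ε

variable {ι x}

theorem norm_map_mul_le {U : C(Y, ℂ)} (hU : ‖U‖ ≤ 1) (a : A) : ‖ι U * a‖ ≤ ‖a‖ :=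
  (norm_mul_le _ _).trans <| mul_le_of_le_one_left (norm_nonneg a) <|
    (NonUnitalStarAlgHom.norm_apply_le ι U).trans hU

theorem isNegligibleAt_zero : IsNegligibleAt ι x 0 := fun ε hε =>
  ⟨1, rfl, (ContinuousMap.norm_le _ zero_le_one).2 fun _ => by simp, by simpa using hε⟩

theorem IsNegligibleAt.add {a b : A} (ha : IsNegligibleAt ι x a) (hb : IsNegligibleAt ι x b) :
    IsNegligibleAt ι x (a + b) := fun ε hε => by
  obtain ⟨U, hUx, hU, hUa⟩ := ha (ε / 2) (half_pos hε)
  obtain ⟨V, hVx, hV, hVb⟩ := hb (ε / 2) (half_pos hε)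
  refine ⟨U * V, by simp [hUx, hVx], (norm_mul_le U V).trans (mul_le_one₀ hU (norm_nonneg V) hV),
    ?_⟩
  have hUV : ι V * ι U = ι U * ι V := by rw [← map_mul, ← map_mul, mul_comm]
  calc ‖ι (U * V) * (a + b)‖ = ‖ι V * (ι U * a) + ι U * (ι V * b)‖ := by
        simp only [map_mul, mul_add, ← mul_assoc, hUV]
    _ ≤ ‖ι U * a‖ + ‖ι V * b‖ :=
        (norm_add_le _ _).trans (add_le_add (norm_map_mul_le hV _) (norm_map_mul_le hU _))
    _ < ε := by linarith

theorem IsNegligibleAt.neg {a : A} (ha : IsNegligibleAt ι x a) : IsNegligibleAt ι x (-a) :=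
  fun ε hε => by simpa only [mul_neg, norm_neg] using ha ε hε

theorem IsNegligibleAt.mul_right {a : A} (ha : IsNegligibleAt ι x a) (b : A) :
    IsNegligibleAt ι x (a * b) := fun ε hε => by
  obtain ⟨U, hUx, hU, hUa⟩ := ha (ε / (‖b‖ + 1)) (by positivity)
  refine ⟨U, hUx, hU, ?_⟩
  calc ‖ι U * (a * b)‖ ≤ ‖ι U * a‖ * ‖b‖ := by rw [← mul_assoc]; exact norm_mul_le _ _
    _ ≤ ε / (‖b‖ + 1) * ‖b‖ := by gcongr
    _ < ε := by
        rw [div_mul_eq_mul_div, div_lt_iff₀ (by positivity)]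
        nlinarith [norm_nonneg b]

theorem IsNegligibleAt.mul_left (hcentral : ∀ f a, Commute (ι f) a) {a : A}
    (ha : IsNegligibleAt ι x a) (b : A) : IsNegligibleAt ι x (b * a) := fun ε hε => by
  obtain ⟨U, hUx, hU, hUa⟩ := ha (ε / (‖b‖ + 1)) (by positivity)
  refine ⟨U, hUx, hU, ?_⟩
  calc ‖ι U * (b * a)‖ ≤ ‖b‖ * ‖ι U * a‖ := by
        rw [← mul_assoc, (hcentral U b).eq, mul_assoc]; exact norm_mul_le _ _
    _ ≤ ‖b‖ * (ε / (‖b‖ + 1)) := by gcongr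
    _ < ε := by
        rw [mul_div_assoc', div_lt_iff₀ (by positivity)]
        nlinarith [norm_nonneg b]

theorem isClosed_setOf_isNegligibleAt : IsClosed {a : A | IsNegligibleAt ι x a} := by
  refine isClosed_of_closure_subset fun a ha ε hε => ?_
  obtain ⟨b, hb, hab⟩ := Metric.mem_closure_iff.1 ha (ε / 2) (half_pos hε)
  obtain ⟨U, hUx, hU, hUb⟩ := hb (ε / 2) (half_pos hε)
  refine ⟨U, hUx, hU, ?_⟩
  calc ‖ι U * a‖ ≤ ‖ι U * (a - b)‖ + ‖ι U * b‖ := by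
        rw [mul_sub]; exact norm_le_norm_sub_add _ _
    _ ≤ dist a b + ‖ι U * b‖ := by
        rw [dist_eq_norm]; gcongr; exact norm_map_mul_le hU _
    _ < ε := by linarith

theorem isNegligibleAt_map_of_apply_eq_zero {f : C(Y, ℂ)} (hf : f x = 0) :
    IsNegligibleAt ι x (ι f) := fun ε hε => by
  obtain ⟨U, hUx, hU, hUf⟩ := ContinuousMap.exists_apply_eq_one_norm_mul_lt hf hε
  refine ⟨U, hUx, hU, ?_⟩
  rw [← map_mul]
  exact (NonUnitalStarAlgHom.norm_apply_le ι _).trans_lt hUf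

variable (ι x) in
def negligibleIdeal (hcentral : ∀ f a, Commute (ι f) a) : TwoSidedIdeal A :=
  .mk' {a | IsNegligibleAt ι x a} isNegligibleAt_zero .add .neg
    (fun ha => ha.mul_left hcentral _) (fun ha => ha.mul_right _)

theorem fiberIdeal_subset_setOf_isNegligibleAt (hcentral : ∀ f a, Commute (ι f) a) :
    fiberIdeal ι x ⊆ {a | IsNegligibleAt ι x a} :=
  Set.sInter_subset_of_mem ⟨isClosed_setOf_isNegligibleAt,
    ⟨negligibleIdeal ι x hcentral, TwoSidedIdeal.coe_mk' ..⟩,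
    by rintro _ ⟨f, hf, rfl⟩; exact isNegligibleAt_map_of_apply_eq_zero hf⟩

end Negligible

section Characters

variable {Y : Type*} [TopologicalSpace Y] [CompactSpace Y] [T2Space Y]

open WeakDual in
theorem CommCStarAlgebra.exists_norm_le_norm_map_mul {B : Type*} [CommCStarAlgebra B]
    [Nontrivial B] (φ : C(Y, ℂ) →⋆ₐ[ℂ] B) (b : B) :
    ∃ x₀ : Y, ∀ U : C(Y, ℂ), U x₀ = 1 → ‖b‖ ≤ ‖φ U * b‖ := by
  have : IsStarNormal b := ⟨mul_comm _ _⟩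
  obtain ⟨z, hz, hzb⟩ := spectrum.exists_nnnorm_eq_spectralRadius b
  rw [IsStarNormal.spectralRadius_eq_nnnorm, ENNReal.coe_inj] at hzb
  obtain ⟨χ, rfl⟩ := CharacterSpace.mem_spectrum_iff_exists.mp hz
  set x₀ := (CharacterSpace.homeoEval Y ℂ).symm (CharacterSpace.compContinuousMap φ χ)
  have hx₀ : ∀ U : C(Y, ℂ), U x₀ = χ (φ U) := fun U =>
    congr($((CharacterSpace.homeoEval Y ℂ).apply_symm_apply
      (CharacterSpace.compContinuousMap φ χ)) U)
  refine ⟨x₀, fun U hU => ?_⟩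
  calc ‖b‖ = ‖χ (φ U * b)‖ := by
        rw [map_mul, ← hx₀, hU, one_mul]
        exact congrArg NNReal.toReal hzb.symm
    _ ≤ ‖φ U * b‖ := spectrum.norm_le_norm_of_mem (AlgHom.apply_mem_spectrum χ _)

open scoped IsMulCommutative in
theorem exists_norm_le_norm_map_mul_of_commute [Nontrivial A] (ι : C(Y, ℂ) →⋆ₐ[ℂ] A) {b : A}
    [IsStarNormal b] (hb : ∀ f, Commute (ι f) b) :
    ∃ x₀ : Y, ∀ U : C(Y, ℂ), U x₀ = 1 → ‖b‖ ≤ ‖ι U * b‖ := by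
  let s : Set A := insert b (Set.range ι)
  have hb_star : ∀ f, Commute (ι f) (star b) := fun f => by
    simpa [map_star] using (hb (star f)).star_star
  have : IsMulCommutative (StarAlgebra.adjoin ℂ s) := by
    refine StarAlgebra.isMulCommutative_adjoin ℂ ?_ ?_
    · rintro _ (rfl | ⟨f, rfl⟩) _ (rfl | ⟨g, rfl⟩)
      · rfl
      · exact (hb g).eq.symm
      · exact (hb f).eq
      · rw [← map_mul, mul_comm, map_mul]
    · rintro _ (rfl | ⟨f, rfl⟩) _ (rfl | ⟨g, rfl⟩)
      · exact (star_comm_self' _).symm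
      · rw [← map_star]; exact (hb (star g)).eq.symm
      · exact (hb_star f).eq
      · rw [← map_star, ← map_mul, mul_comm, map_mul]
  let S := (StarAlgebra.adjoin ℂ s).topologicalClosure
  have : IsClosed (S : Set A) := (StarAlgebra.adjoin ℂ s).isClosed_topologicalClosure
  let _ : CommRing S := (StarAlgebra.adjoin ℂ s).commRingTopologicalClosure mul_comm
  let _ : CommCStarAlgebra S := { }
  have hS : s ⊆ S := (StarAlgebra.subset_adjoin ℂ s).trans
    (StarAlgebra.adjoin ℂ s).le_topologicalClosure
  obtain ⟨x₀, hx₀⟩ := CommCStarAlgebra.exists_norm_le_norm_map_mul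
    (ι.codRestrict S fun f => hS (Set.mem_insert_of_mem _ ⟨f, rfl⟩))
    ⟨b, hS (Set.mem_insert b _)⟩
  exact ⟨x₀, hx₀⟩

theorem eq_zero_of_forall_isNegligibleAt (ι : C(Y, ℂ) →⋆ₐ[ℂ] A) {b : A} [IsStarNormal b]
    (hb : ∀ f, Commute (ι f) b) (h : ∀ x, IsNegligibleAt ι x b) : b = 0 := by
  nontriviality A
  obtain ⟨x₀, hx₀⟩ := exists_norm_le_norm_map_mul_of_commute ι hb
  refine norm_le_zero_iff.1 (le_of_forall_pos_le_add fun ε hε => ?_)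
  obtain ⟨U, hUx, -, hU⟩ := h x₀ ε hε
  linarith [hx₀ U hUx]

theorem eq_zero_of_forall_mem_fiberIdeal (ι : C(Y, ℂ) →⋆ₐ[ℂ] A)
    (hcentral : ∀ f a, Commute (ι f) a) {a : A} (ha : ∀ x, a ∈ fiberIdeal ι x) : a = 0 := by
  have : IsStarNormal (star a * a) := (IsSelfAdjoint.star_mul_self a).isStarNormal
  refine (CStarRing.star_mul_self_eq_zero_iff a).1 <|
    eq_zero_of_forall_isNegligibleAt ι (fun f => hcentral f _) fun x => ?_
  exact (fiberIdeal_subset_setOf_isNegligibleAt hcentral (ha x)).mul_left hcentral (star a)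

end Characters

/-- For a unital `C(X)`-structure `ι` on a unital C*-algebra `A`, the
intersection of the fibre ideals `I_x` is `{0}`; equivalently, an element whose fibre
norms all vanish is zero. -/
theorem stmt9 (ι : C(X, ℂ) →⋆ₐ[ℂ] A)
    (hcentral : ∀ (f : C(X, ℂ)) (a : A), ι f * a = a * ι f) :
    (⋂ x : X, fiberIdeal ι x) = {0} ∧
      ∀ a : A, (∀ x : X, fiberNorm ι x a = 0) → a = 0 := by
  have h_eq_zero : ∀ a : A, (∀ x, a ∈ fiberIdeal ι x) → a = 0 :=
    fun _ => eq_zero_of_forall_mem_fiberIdeal ι hcentral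
  refine ⟨Set.eq_singleton_iff_unique_mem.2 ⟨?_, fun a ha => h_eq_zero a (Set.mem_iInter.1 ha)⟩,
    fun a ha => h_eq_zero a fun x => (fiberNorm_eq_zero_iff ι x).1 (ha x)⟩
  exact Set.mem_iInter.2 (zero_mem_fiberIdeal ι)
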